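/- arXiv:2512.20143 — 7 statements merged into one kernel-verified Lean document; each statement's English description precedes it below -/
import Mathlib

section
/- Let G be an additive abelian group, Q a finitely generated saturated submonoid of G, r a natural number, and φ : (Fin r → ℕ) →+ G an additive monoid homomorphism of Kummer type into Q. Then the induced ring homomorphism ℤ[Fin r → ℕ] → ℤ[Q] (given by mapDomain along the corestriction of φ to Q) is faithfully flat, and ℤ[Q] is a finitely generated module over ℤ[Fin r → ℕ]. -/
/-- A submonoid `Q` of an additive abelian group `G` is *saturated* if every element `g` of the
subgroup of `G` generated by `Q` such that `n • g ∈ Q` for some integer `n ≥ 1` lies in `Q`. -/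
def IsSaturated {G : Type*} [AddCommGroup G] (Q : AddSubmonoid G) : Prop :=
  ∀ g ∈ AddSubgroup.closure (Q : Set G), (∃ n : ℤ, 1 ≤ n ∧ n • g ∈ Q) → g ∈ Q

/-- An additive monoid homomorphism `φ : (Fin r → ℕ) →+ G` is *of Kummer type into `Q`* if it is
injective, its image is contained in `Q`, and every `q ∈ Q` has a positive integer multiple in the
image of `φ`. -/
def IsKummerType {G : Type*} [AddCommGroup G] {r : ℕ} (φ : (Fin r → ℕ) →+ G)
    (Q : AddSubmonoid G) : Prop :=
  Function.Injective φ ∧ (∀ x, φ x ∈ Q) ∧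
    ∀ q ∈ Q, ∃ n : ℤ, 1 ≤ n ∧ n • q ∈ Set.range φ

/-! The map `φ` extends to an injective `φ̄ = intExtension φ : ℤ^r →+ G`; let `L` be its image.
Saturation of `Q` shows that for `q ∈ Q` the set `{u | q + φ̄ u ∈ Q}` is a translate `c + ℕ^r`, so
each coset of `L` meeting `Q` contains a unique `q₀` with `(q₀ + L) ∩ Q = q₀ + φ(ℕ^r)`. Hence `Q` is
a free `ℕ^r`-set on the image `T` of `Q` in `G ⧸ L`, and `ℤ[Q]` is a free `ℤ[ℕ^r]`-module with basis
indexed by `T`. Finally `T` is finite, being a finitely generated monoid of torsion elements. -/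

theorem AddSubmonoid.FG.finite_of_isOfFinAddOrder {H : Type*} [AddCommGroup H]
    {P : AddSubmonoid H} (hP : P.FG) (htors : ∀ x ∈ P, IsOfFinAddOrder x) :
    (P : Set H).Finite := by
  obtain ⟨S, rfl⟩ := hP
  have hclosure := AddSubgroup.closure_toAddSubmonoid_of_isOfFinAddOrder
    fun x hx => htors x (AddSubmonoid.subset_closure hx)
  have : Finite (AddSubgroup.closure (S : Set H)) :=
    AddCommGroup.finite_of_fg_isAddTorsion _ fun x =>
      AddSubmonoid.isOfFinAddOrder_coe.1 (htors x (hclosure ▸ x.2))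
  rw [← hclosure]
  exact Set.toFinite _

section IntExtension

variable {ι G : Type*} [Fintype ι] [DecidableEq ι] [AddCommGroup G]

noncomputable def intExtension (φ : (ι → ℕ) →+ G) : (ι → ℤ) →+ G :=
  (Fintype.linearCombination ℤ fun i => φ (Pi.single i 1)).toAddMonoidHom

theorem intExtension_natCast (φ : (ι → ℕ) →+ G) (m : ι → ℕ) :
    intExtension φ (fun i => m i) = φ m := by
  suffices (intExtension φ).comp ((Nat.castAddMonoidHom ℤ).compLeft ι) = φ from
    DFunLike.congr_fun this m
  ext i
  simp [intExtension, Fintype.linearCombination_apply, Pi.single_apply]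

theorem intExtension_eq_sub (φ : (ι → ℕ) →+ G) (v : ι → ℤ) :
    intExtension φ v = φ (fun i => (v i).toNat) - φ (fun i => (-v i).toNat) := by
  rw [← intExtension_natCast, ← intExtension_natCast, ← map_sub]
  congr 1
  ext i
  simp only [Pi.sub_apply]
  omega

theorem intExtension_injective {φ : (ι → ℕ) →+ G} (hφ : Function.Injective φ) :
    Function.Injective (intExtension φ) := by
  refine (injective_iff_map_eq_zero _).2 fun v hv => ?_
  rw [intExtension_eq_sub, sub_eq_zero] at hv
  ext i
  have := congrFun (hφ hv) i
  simp only [Pi.zero_apply]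
  omega

end IntExtension

theorem IsSaturated.zsmul_mem_iff {G : Type*} [AddCommGroup G] {Q : AddSubmonoid G}
    (hQ : IsSaturated Q) {g : G} (hg : g ∈ AddSubgroup.closure (Q : Set G)) {n : ℤ} (hn : 1 ≤ n) :
    n • g ∈ Q ↔ g ∈ Q := by
  refine ⟨fun h => hQ g hg ⟨n, hn, h⟩, fun h => ?_⟩
  lift n to ℕ using by omega
  rw [natCast_zsmul]
  exact nsmul_mem h n

namespace IsKummerType

variable {G : Type*} [AddCommGroup G] {Q : AddSubmonoid G} {r : ℕ} {φ : (Fin r → ℕ) →+ G}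

theorem intExtension_mem_iff (hφ : IsKummerType φ Q) {v : Fin r → ℤ} :
    intExtension φ v ∈ Q ↔ 0 ≤ v := by
  refine ⟨fun hv i => ?_, fun hv => ?_⟩
  · obtain ⟨n, hn, w, hw⟩ := hφ.2.2 _ hv
    have hnv : n • v = fun i => (w i : ℤ) :=
      intExtension_injective hφ.1 (by rw [map_zsmul, intExtension_natCast, hw])
    have := congrFun hnv i
    simp only [Pi.smul_apply, smul_eq_mul] at this
    show 0 ≤ v i
    nlinarith [(w i).cast_nonneg (α := ℤ)]
  · have hv' : v = fun i => ((v i).toNat : ℤ) := funext fun i => (Int.toNat_of_nonneg (hv i)).symm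
    rw [hv', intExtension_natCast]
    exact hφ.2.1 _

theorem intExtension_mem_closure (hφ : IsKummerType φ Q) (v : Fin r → ℤ) :
    intExtension φ v ∈ AddSubgroup.closure (Q : Set G) := by
  rw [intExtension_eq_sub]
  exact sub_mem (AddSubgroup.subset_closure (hφ.2.1 _)) (AddSubgroup.subset_closure (hφ.2.1 _))

theorem exists_add_intExtension_mem_iff (hQ : IsSaturated Q) (hφ : IsKummerType φ Q) {q : G}
    (hq : q ∈ Q) : ∃ c : Fin r → ℤ, ∀ u, q + intExtension φ u ∈ Q ↔ c ≤ u := by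
  obtain ⟨n, hn, w, hw⟩ := hφ.2.2 q hq
  -- `n • (q + φ̄ u) = φ̄ (w + n • u)`, so `q + φ̄ u ∈ Q ↔ 0 ≤ w + n • u ↔ -(w / n) ≤ u`
  refine ⟨fun i => -((w i : ℤ) / n), fun u => ?_⟩
  have hclosure : q + intExtension φ u ∈ AddSubgroup.closure (Q : Set G) :=
    add_mem (AddSubgroup.subset_closure hq) (hφ.intExtension_mem_closure u)
  rw [← hQ.zsmul_mem_iff hclosure hn, smul_add, ← map_zsmul, ← hw, ← intExtension_natCast,
    ← map_add, hφ.intExtension_mem_iff, Pi.le_def, Pi.le_def]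
  refine forall_congr' fun i => ?_
  rw [neg_le, Int.le_ediv_iff_mul_le (by omega)]
  simp only [Pi.zero_apply, Pi.add_apply, Pi.smul_apply, smul_eq_mul]
  constructor <;> intro <;> linarith

theorem exists_mk_eq_forall_add_mem_iff (hQ : IsSaturated Q) (hφ : IsKummerType φ Q) {q : G}
    (hq : q ∈ Q) : ∃ q₀ ∈ Q, (q₀ : G ⧸ (intExtension φ).range) = q ∧
      ∀ u, q₀ + intExtension φ u ∈ Q ↔ 0 ≤ u := by
  obtain ⟨c, hc⟩ := hφ.exists_add_intExtension_mem_iff hQ hq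
  refine ⟨q + intExtension φ c, (hc c).2 le_rfl, ?_, fun u => ?_⟩
  · rw [QuotientAddGroup.mk_add,
      (QuotientAddGroup.eq_zero_iff _).2 (AddMonoidHom.mem_range.2 ⟨c, rfl⟩), add_zero]
  · rw [add_assoc, ← map_add, hc, le_add_iff_nonneg_right]

theorem isOfFinAddOrder_mk (hφ : IsKummerType φ Q) {q : G} (hq : q ∈ Q) :
    IsOfFinAddOrder (q : G ⧸ (intExtension φ).range) := by
  obtain ⟨n, hn, w, hw⟩ := hφ.2.2 q hq
  refine isOfFinAddOrder_iff_zsmul_eq_zero.2 ⟨n, by omega, ?_⟩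
  rw [← QuotientAddGroup.mk_zsmul, QuotientAddGroup.eq_zero_iff, ← hw, ← intExtension_natCast]
  exact AddMonoidHom.mem_range.2 ⟨_, rfl⟩

theorem bijective_add_codRestrict (hφ : IsKummerType φ Q)
    {T : Set (G ⧸ (intExtension φ).range)} (hT : ∀ q ∈ Q, (q : G ⧸ (intExtension φ).range) ∈ T)
    (ρ : T → Q) (hρ : ∀ t : T, ((ρ t : G) : G ⧸ (intExtension φ).range) = t)
    (hmin : ∀ t u, (ρ t : G) + intExtension φ u ∈ Q ↔ 0 ≤ u) :
    Function.Bijective fun p : T × (Fin r → ℕ) => ρ p.1 + φ.codRestrict Q hφ.2.1 p.2 := by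
  have hmk (m : Fin r → ℕ) : ((φ m : G) : G ⧸ (intExtension φ).range) = 0 :=
    (QuotientAddGroup.eq_zero_iff _).2 (AddMonoidHom.mem_range.2 ⟨_, intExtension_natCast φ m⟩)
  refine ⟨fun ⟨t, m⟩ ⟨t', m'⟩ h => ?_, fun q => ?_⟩
  · have hG : (ρ t : G) + φ m = ρ t' + φ m' := congrArg Subtype.val h
    have ht : t = t' := Subtype.ext <| by
      simpa only [QuotientAddGroup.mk_add, hρ, hmk, add_zero] using
        congrArg ((↑) : G → G ⧸ (intExtension φ).range) hG
    subst ht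
    rw [hφ.1 (add_left_cancel hG)]
  · let t : T := ⟨q, hT q q.2⟩
    obtain ⟨u, hu⟩ := QuotientAddGroup.eq.1 (hρ t)
    have hq : (ρ t : G) + intExtension φ u = q := by rw [hu]; abel
    have hu0 : 0 ≤ u := (hmin t u).1 (hq ▸ q.2)
    refine ⟨(t, fun i => (u i).toNat), Subtype.ext ?_⟩
    rw [← hq]
    show (ρ t : G) + φ _ = _
    rw [← intExtension_natCast]
    congr 2
    exact funext fun i => Int.toNat_of_nonneg (hu0 i)

theorem exists_finite_bijective (hQfg : Q.FG) (hQsat : IsSaturated Q) (hφ : IsKummerType φ Q) :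
    ∃ (T : Set (G ⧸ (intExtension φ).range)) (ρ : T → Q), T.Finite ∧
      Function.Bijective fun p : T × (Fin r → ℕ) => ρ p.1 + φ.codRestrict Q hφ.2.1 p.2 := by
  set π := QuotientAddGroup.mk' (intExtension φ).range
  have hfin : (Q.map π : Set (G ⧸ (intExtension φ).range)).Finite :=
    (hQfg.map π).finite_of_isOfFinAddOrder (by
      rintro _ ⟨q, hq, rfl⟩
      exact hφ.isOfFinAddOrder_mk hq)
  have hrep : ∀ t : Q.map π, ∃ q₀ : Q, ((q₀ : G) : G ⧸ (intExtension φ).range) = t ∧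
      ∀ u, (q₀ : G) + intExtension φ u ∈ Q ↔ 0 ≤ u := by
    rintro ⟨_, q, hq, rfl⟩
    obtain ⟨q₀, hq₀, hmk, hmin⟩ := hφ.exists_mk_eq_forall_add_mem_iff hQsat hq
    exact ⟨⟨q₀, hq₀⟩, hmk, hmin⟩
  choose ρ hρ hmin using hrep
  exact ⟨_, ρ, hfin,
    hφ.bijective_add_codRestrict (fun _ hq => AddSubmonoid.mem_map_of_mem π hq) ρ hρ hmin⟩

end IsKummerType

namespace AddMonoidAlgebra

variable {R M N T : Type*} [CommSemiring R] [AddCommMonoid M] [AddCommMonoid N]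

variable {ψ : M →+ N} {ρ : T → N} (h : Function.Bijective fun p : T × M => ρ p.1 + ψ p.2)

theorem ofBijective_symm_add (m : M) (n : N) :
    (Equiv.ofBijective _ h).symm (ψ m + n) =
      (((Equiv.ofBijective _ h).symm n).1, m + ((Equiv.ofBijective _ h).symm n).2) := by
  refine (Equiv.ofBijective _ h).injective ?_
  conv_lhs => rw [Equiv.apply_symm_apply, ← Equiv.ofBijective_apply_symm_apply _ h n]
  simp only [Equiv.ofBijective_apply, map_add]
  abel

variable (R)

noncomputable def coeffEquivOfBijective : R[N] ≃ₗ[R] (T →₀ R[M]) :=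
  coeffLinearEquiv R ≪≫ₗ Finsupp.domLCongr (Equiv.ofBijective _ h).symm ≪≫ₗ
    Finsupp.curryLinearEquiv R ≪≫ₗ Finsupp.mapRange.linearEquiv (coeffLinearEquiv R).symm

theorem coeffEquivOfBijective_single (n : N) (c : R) :
    coeffEquivOfBijective R h (single n c) =
      Finsupp.single ((Equiv.ofBijective _ h).symm n).1
        (single ((Equiv.ofBijective _ h).symm n).2 c) := by
  simp [coeffEquivOfBijective, coeffLinearEquiv, Finsupp.curry_single]

noncomputable def basisOfBijective :
    letI := (mapDomainRingHom R ψ).toAlgebra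
    Module.Basis T R[M] R[N] :=
  letI := (mapDomainRingHom R ψ).toAlgebra
  .ofRepr
    { coeffEquivOfBijective R h with
      map_smul' x y := by
        induction x using AddMonoidAlgebra.induction_linear with
        | zero => simp
        | add a b ha hb => simp_all [add_smul]
        | single m a =>
          induction y using AddMonoidAlgebra.induction_linear with
          | zero => simp
          | add u w hu hw => simp_all [smul_add]
          | single n c =>
            simp [RingHom.smul_toAlgebra, coeffEquivOfBijective_single, ofBijective_symm_add,
              Finsupp.smul_single, single_mul_single] }

end AddMonoidAlgebra

/-- Lemma 2.6: a Kummer-type morphism from a free monoid `ℕ^r` into a finitely generated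
saturated submonoid `Q` induces a faithfully flat, module-finite map `ℤ[ℕ^r] → ℤ[Q]` of monoid
algebras. -/
theorem faithfullyFlat_finite_of_kummerType
    {G : Type*} [AddCommGroup G] (Q : AddSubmonoid G) (hQfg : Q.FG) (hQsat : IsSaturated Q)
    {r : ℕ} (φ : (Fin r → ℕ) →+ G) (hφ : IsKummerType φ Q) :
    let ψ : (Fin r → ℕ) →+ Q := (φ.codRestrict Q hφ.2.1)
    let f : AddMonoidAlgebra ℤ (Fin r → ℕ) →+* AddMonoidAlgebra ℤ Q :=
      AddMonoidAlgebra.mapDomainRingHom ℤ ψ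
    letI := f.toAlgebra
    Module.FaithfullyFlat (AddMonoidAlgebra ℤ (Fin r → ℕ)) (AddMonoidAlgebra ℤ Q) ∧
      Module.Finite (AddMonoidAlgebra ℤ (Fin r → ℕ)) (AddMonoidAlgebra ℤ Q) := by
  intro ψ f
  let _ := f.toAlgebra
  obtain ⟨T, ρ, hT, hρ⟩ := hφ.exists_finite_bijective hQfg hQsat
  have := hT.to_subtype
  let b := AddMonoidAlgebra.basisOfBijective ℤ hρ
  have := Module.Free.of_basis b
  exact ⟨inferInstance, Module.Finite.of_basis b⟩
end

section
/- Let Q be a cancellative additive commutative monoid and q ∈ Q an element such that the map ℕ → Q, n ↦ n • q, is injective. Then ℤ[Q] = AddMonoidAlgebra ℤ Q is a flat module over ℤ[ℕ] = AddMonoidAlgebra ℤ ℕ, via the ring homomorphism induced by the additive monoid homomorphism ℕ →+ Q sending n to n • q. -/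
/-!
The minimal elements of a finite set `F ⊆ Q`, those not of the form `z + (k + 1) • q` with
`z ∈ F`, have `ℕ`-orbits `m + ℕ • q` covering `F`, and since `Q` is cancellative and `q` has
infinite order these orbits are pairwise disjoint copies of `ℕ`. So the monomials `single m 1`
at the minimal elements are a basis of a free `ℤ[ℕ]`-submodule of `ℤ[Q]` containing every
element supported on `F`. Hence `ℤ[Q]` is a directed union of free submodules (it need not be
free itself, e.g. for `Q = ℤ`), and a relation in it is trivial because it is trivial in one of
them: `ℤ[Q]` is flat by the equational criterion.
-/

open Function AddMonoidAlgebra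

theorem Module.Flat.of_forall_finset_subset_flat_submodule {R M : Type*} [CommRing R]
    [AddCommGroup M] [Module R M]
    (h : ∀ s : Finset M, ∃ N : Submodule R M, Module.Flat R N ∧ ↑s ⊆ (N : Set M)) :
    Module.Flat R M := by
  classical
  refine Module.Flat.of_forall_isTrivialRelation fun {l f x} hfx => ?_
  obtain ⟨N, hN, hxN⟩ := h (Finset.univ.image x)
  let x' : Fin l → N := fun i => ⟨x i, hxN (by simp)⟩
  have hfx' : ∑ i, f i • x' i = 0 := Subtype.ext (by simpa [x'] using hfx)
  obtain ⟨k, a, y, hxy, hfa⟩ := Module.Flat.isTrivialRelation_of_sum_smul_eq_zero hfx'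
  exact ⟨k, a, fun j => y j, fun i => by simpa using congrArg Subtype.val (hxy i), hfa⟩

section Translates

variable {Q : Type*} [AddCancelCommMonoid Q] {q : Q}

theorem exists_maximal_translate (hq : Injective fun n : ℕ => n • q) {F : Finset Q} {y : Q}
    (hy : y ∈ F) :
    ∃ m ∈ F, ∃ n : ℕ, y = m + n • q ∧ ∀ m' ∈ F, ∀ n' : ℕ, y = m' + n' • q → n' ≤ n := by
  let S : Set (Q × ℕ) := {p | p.1 ∈ F ∧ y = p.1 + p.2 • q}
  have hS : S.Finite := by
    refine Set.Finite.of_finite_image (f := Prod.fst) (F.finite_toSet.subset ?_) ?_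
    · rintro _ ⟨p, hp, rfl⟩
      exact hp.1
    · rintro ⟨m, n⟩ ⟨-, h⟩ ⟨m', n'⟩ ⟨-, h'⟩ (rfl : m = m')
      exact congrArg (Prod.mk m) (hq (add_left_cancel (h.symm.trans h')))
  obtain ⟨⟨m, n⟩, ⟨hm, hy⟩, hmax⟩ := Set.exists_max_image S Prod.snd hS ⟨(y, 0), hy, by simp⟩
  exact ⟨m, hm, n, hy, fun m' hm' n' h' => hmax (m', n') ⟨hm', h'⟩⟩

variable (q) in
def minimalTranslates (F : Finset Q) : Set Q :=
  {m | m ∈ F ∧ ∀ z ∈ F, ∀ k : ℕ, m ≠ z + (k + 1) • q}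

theorem exists_mem_minimalTranslates (hq : Injective fun n : ℕ => n • q) {F : Finset Q} {y : Q}
    (hy : y ∈ F) : ∃ m ∈ minimalTranslates q F, ∃ n : ℕ, y = m + n • q := by
  obtain ⟨m, hm, n, hy, hmax⟩ := exists_maximal_translate hq hy
  refine ⟨m, ⟨hm, fun z hz k hmz => ?_⟩, n, hy⟩
  have := hmax z hz (n + (k + 1)) (by rw [hy, hmz, add_assoc, ← add_nsmul, add_comm (k + 1)])
  omega

theorem injective_add_nsmul_minimalTranslates (F : Finset Q) :
    Injective fun p : minimalTranslates q F × ℕ => (p.1 : Q) + p.2 • q := by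
  have key : ∀ {m m' : Q} {n n' : ℕ}, m ∈ minimalTranslates q F → m' ∈ F → n ≤ n' →
      m + n • q = m' + n' • q → n = n' := by
    intro m m' n n' hm hm' hle h
    obtain ⟨_ | k, rfl⟩ := Nat.exists_eq_add_of_le hle
    · rfl
    · refine absurd (add_right_cancel (b := n • q) ?_) (hm.2 m' hm' k)
      rw [h, add_assoc, ← add_nsmul, add_comm n]
  rintro ⟨⟨m, hm⟩, n⟩ ⟨⟨m', hm'⟩, n'⟩ h
  dsimp only at h
  obtain rfl : n = n' :=
    (le_total n n').elim (key hm hm'.1 · h) fun hle => (key hm' hm.1 hle h.symm).symm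
  obtain rfl : m = m' := add_right_cancel h
  rfl

end Translates

namespace AddMonoidAlgebra

section CommSemiring

variable {R Q : Type*} [CommSemiring R] [AddCancelCommMonoid Q] {q : Q}

theorem smul_single_one_eq_mapDomain (p : R[ℕ]) (m : Q) :
    letI := (mapDomainRingHom R (multiplesHom Q q)).toAlgebra
    p • single m (1 : R) = mapDomain (fun n => m + n • q) p := by
  let _ := (mapDomainRingHom R (multiplesHom Q q)).toAlgebra
  induction p using AddMonoidAlgebra.induction_linear with
  | zero => simp
  | add a b ha hb => rw [add_smul, ha, hb, mapDomain_add]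
  | single n r =>
    rw [Algebra.smul_def, RingHom.algebraMap_toAlgebra]
    simp [single_mul_single, add_comm]

theorem coeff_linearCombination_single_one {κ : Set Q}
    (hκ : Injective fun p : κ × ℕ => (p.1 : Q) + p.2 • q) (l : κ →₀ R[ℕ]) (m : κ) (n : ℕ) :
    letI := (mapDomainRingHom R (multiplesHom Q q)).toAlgebra
    (Finsupp.linearCombination R[ℕ] (fun m : κ => single (m : Q) (1 : R)) l).coeff
      (m + n • q) = (l m).coeff n := by
  let _ := (mapDomainRingHom R (multiplesHom Q q)).toAlgebra
  simp only [Finsupp.linearCombination_apply, coeff_finsuppSum, smul_single_one_eq_mapDomain,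
    coeff_mapDomain, Finsupp.sum_apply]
  rw [Finsupp.sum_eq_single m]
  · exact Finsupp.mapDomain_apply (fun a b h => congrArg Prod.snd (@hκ (m, a) (m, b) h)) _ n
  · rintro m' - hm'
    refine Finsupp.mapDomain_of_notMem_range _ _ ?_
    rintro ⟨n', h⟩
    exact hm' (congrArg Prod.fst (@hκ (m', n') (m, n) h))
  · simp

theorem linearIndependent_single_one {κ : Set Q}
    (hκ : Injective fun p : κ × ℕ => (p.1 : Q) + p.2 • q) :
    letI := (mapDomainRingHom R (multiplesHom Q q)).toAlgebra
    LinearIndependent R[ℕ] fun m : κ => single (m : Q) (1 : R) := by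
  let _ := (mapDomainRingHom R (multiplesHom Q q)).toAlgebra
  intro l l' h
  ext m n
  rw [← coeff_linearCombination_single_one hκ, h, coeff_linearCombination_single_one hκ]

theorem single_add_nsmul_mem_span {κ : Set Q} {m : Q} (hm : m ∈ κ) (n : ℕ) (r : R) :
    letI := (mapDomainRingHom R (multiplesHom Q q)).toAlgebra
    single (m + n • q) r ∈
      Submodule.span R[ℕ] (Set.range fun m : κ => single (m : Q) (1 : R)) := by
  let _ := (mapDomainRingHom R (multiplesHom Q q)).toAlgebra
  have : single n r • single m (1 : R) = single (m + n • q) r := by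
    rw [smul_single_one_eq_mapDomain, mapDomain_single]
  exact this ▸ Submodule.smul_mem _ _ (Submodule.subset_span ⟨⟨m, hm⟩, rfl⟩)

theorem mem_span_single_one_of_forall_mem_support {κ : Set Q} {x : R[Q]}
    (hx : ∀ y ∈ x.coeff.support, ∃ m ∈ κ, ∃ n : ℕ, y = m + n • q) :
    letI := (mapDomainRingHom R (multiplesHom Q q)).toAlgebra
    x ∈ Submodule.span R[ℕ] (Set.range fun m : κ => single (m : Q) (1 : R)) := by
  let _ := (mapDomainRingHom R (multiplesHom Q q)).toAlgebra
  rw [← sum_coeff_single x]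
  refine Submodule.finsuppSum_mem _ _ _ _ fun y hy => ?_
  obtain ⟨m, hm, n, rfl⟩ := hx y (Finsupp.mem_support_iff.2 hy)
  exact single_add_nsmul_mem_span hm n _

end CommSemiring

theorem flat_of_injective_nsmul {R Q : Type*} [CommRing R] [AddCancelCommMonoid Q] {q : Q}
    (hq : Injective fun n : ℕ => n • q) :
    letI := (mapDomainRingHom R (multiplesHom Q q)).toAlgebra
    Module.Flat R[ℕ] R[Q] := by
  let _ := (mapDomainRingHom R (multiplesHom Q q)).toAlgebra
  classical
  refine Module.Flat.of_forall_finset_subset_flat_submodule fun s => ?_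
  let κ := minimalTranslates q (s.biUnion fun x => x.coeff.support)
  let N := Submodule.span R[ℕ] (Set.range fun m : κ => single (m : Q) (1 : R))
  have : Module.Free R[ℕ] N := .of_basis <| Module.Basis.span <|
    linearIndependent_single_one (injective_add_nsmul_minimalTranslates _)
  refine ⟨N, inferInstance, fun x hx => mem_span_single_one_of_forall_mem_support fun y hy => ?_⟩
  exact exists_mem_minimalTranslates hq (Finset.mem_biUnion.2 ⟨x, hx, hy⟩)

end AddMonoidAlgebra

/-- Lemma 2.8: for a cancellative commutative monoid `Q` and an element `q ∈ Q` generating a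
free submonoid of rank one, the induced ring homomorphism `ℤ[ℕ] → ℤ[Q]` is flat. -/
theorem flat_monoidAlgebra_of_rank_one
    {Q : Type*} [AddCancelCommMonoid Q] (q : Q)
    (hq : Function.Injective fun n : ℕ => n • q) :
    let f : AddMonoidAlgebra ℤ ℕ →+* AddMonoidAlgebra ℤ Q :=
      AddMonoidAlgebra.mapDomainRingHom ℤ (multiplesHom Q q)
    letI := f.toAlgebra
    Module.Flat (AddMonoidAlgebra ℤ ℕ) (AddMonoidAlgebra ℤ Q) :=
  AddMonoidAlgebra.flat_of_injective_nsmul hq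
end

section
/- Let k be a field, Q a cancellative additive commutative monoid, and q ∈ Q an element such that the map ℕ → Q, n ↦ n • q, is injective. Regard k[Q] = AddMonoidAlgebra k Q as a module over k[ℕ] = AddMonoidAlgebra k ℕ via the ring homomorphism induced by the additive monoid homomorphism ℕ →+ Q sending n to n • q. Then k[Q] is a torsion-free k[ℕ]-module: for every nonzero f ∈ k[ℕ] and every m ∈ k[Q], if f • m = 0 then m = 0. -/
/-!
Let `d` be the top degree of `f ≠ 0` and pick `x` in the support of `m ≠ 0` such that no
`x + n • q` with `n > 0` lies in that support (maximise `n` with `x₀ + n • q` in the support; there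
are finitely many such `n` since `n ↦ x₀ + n • q` is injective). Then `d • q + x` is reached in
exactly one way from the supports of `f` and `m`, so its coefficient in `f • m` is
`f_d · m_x ≠ 0`.
-/

section Multiples

variable {Q : Type*} [AddCancelCommMonoid Q] {q : Q}

theorem Finset.exists_forall_add_nsmul_mem_eq_zero (hq : Function.Injective fun n : ℕ => n • q)
    {S : Finset Q} (hS : S.Nonempty) : ∃ x ∈ S, ∀ n : ℕ, x + n • q ∈ S → n = 0 := by
  obtain ⟨x, hx⟩ := hS
  have hfin : {n : ℕ | x + n • q ∈ S}.Finite :=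
    S.finite_toSet.preimage ((add_right_injective x).comp hq).injOn
  obtain ⟨N, hN⟩ := hfin.exists_maximal ⟨0, by simpa using hx⟩
  refine ⟨x + N • q, hN.prop, fun n hn => ?_⟩
  have : N + n ≤ N := hN.le_of_ge (by simpa [add_smul, add_assoc] using hn) (Nat.le_add_right N n)
  omega

theorem uniqueAdd_image_nsmul_of_forall_add_nsmul_mem_eq_zero [DecidableEq Q] {T : Finset ℕ}
    {S : Finset Q} {d : ℕ} (hd : ∀ n ∈ T, n ≤ d) {x : Q} (hx : ∀ n : ℕ, x + n • q ∈ S → n = 0) :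
    UniqueAdd (T.image (· • q)) S (d • q) x := by
  intro a b ha hb hab
  obtain ⟨n, hn, rfl⟩ := Finset.mem_image.mp ha
  obtain ⟨j, rfl⟩ := Nat.exists_eq_add_of_le (hd n hn)
  have hb' : b = x + j • q := by
    rw [add_smul, add_assoc, add_comm (j • q)] at hab
    exact add_left_cancel hab
  have hj : j = 0 := hx j (hb' ▸ hb)
  simp [hb', hj]

end Multiples

namespace AddMonoidAlgebra

section MapDomain

variable {R M N : Type*} [Semiring R] [AddMonoid M] [AddMonoid N] {φ : M →+ N}

theorem support_coeff_mapDomainRingHom [DecidableEq N] (hφ : Function.Injective φ) (x : R[M]) :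
    (mapDomainRingHom R φ x).coeff.support = x.coeff.support.image φ :=
  Finsupp.mapDomain_support_of_injective hφ x.coeff

theorem coeff_mapDomainRingHom_apply (hφ : Function.Injective φ) (x : R[M]) (a : M) :
    (mapDomainRingHom R φ x).coeff (φ a) = x.coeff a :=
  Finsupp.mapDomain_apply hφ x.coeff a

end MapDomain

variable {R Q : Type*} [Semiring R] [AddCancelCommMonoid Q] {q : Q}

theorem mapDomainRingHom_multiplesHom_mul_ne_zero [NoZeroDivisors R]
    (hq : Function.Injective fun n : ℕ => n • q) {f : R[ℕ]} (hf : f ≠ 0)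
    {m : R[Q]} (hm : m ≠ 0) : mapDomainRingHom R (multiplesHom Q q) f * m ≠ 0 := by
  classical
  simp only [ne_eq, ← coeff_eq_zero, ← Finsupp.support_nonempty_iff] at hf hm
  set d := f.coeff.support.max' hf
  obtain ⟨x, hxm, hx⟩ := Finset.exists_forall_add_nsmul_mem_eq_zero hq hm
  have hunique : UniqueAdd (mapDomainRingHom R (multiplesHom Q q) f).coeff.support
      m.coeff.support (multiplesHom Q q d) x := by
    rw [support_coeff_mapDomainRingHom hq]
    exact uniqueAdd_image_nsmul_of_forall_add_nsmul_mem_eq_zero (f.coeff.support.le_max' · ·) hx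
  intro hzero
  have hcoeff := coeff_mul_add_of_uniqueAdd hunique
  rw [hzero, coeff_mapDomainRingHom_apply hq, coeff_zero, Finsupp.zero_apply] at hcoeff
  exact mul_ne_zero (Finsupp.mem_support_iff.mp (f.coeff.support.max'_mem hf))
    (Finsupp.mem_support_iff.mp hxm) hcoeff.symm

end AddMonoidAlgebra

/-- Key step in Lemma 2.8: for a field `k`, a cancellative commutative monoid `Q`, and an element
`q ∈ Q` generating a free submonoid of rank one, `k[Q]` is a torsion-free module over
`k[ℕ] ≅ k[t]`. -/
theorem torsionFree_monoidAlgebra_of_rank_one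
    (k : Type*) [Field k] {Q : Type*} [AddCancelCommMonoid Q] (q : Q)
    (hq : Function.Injective fun n : ℕ => n • q) :
    let F : AddMonoidAlgebra k ℕ →+* AddMonoidAlgebra k Q :=
      AddMonoidAlgebra.mapDomainRingHom k (multiplesHom Q q)
    letI := F.toAlgebra
    ∀ f : AddMonoidAlgebra k ℕ, f ≠ 0 →
      ∀ m : AddMonoidAlgebra k Q, f • m = 0 → m = 0 := by
  intro F f hf m hfm
  change F f * m = 0 at hfm
  by_contra hm
  exact AddMonoidAlgebra.mapDomainRingHom_multiplesHom_mul_ne_zero hq hf hm hfm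
end

section
/- Let R be a commutative ring, H and G additive abelian groups, and f : H →+ G an injective group homomorphism. Then R[G] = AddMonoidAlgebra R G is a free module over R[H] = AddMonoidAlgebra R H via the ring homomorphism induced by f; more precisely, there is a basis of R[G] over R[H] indexed by the quotient group G ⧸ f(H), given by the basis elements of any set of coset representatives of f(H) in G. -/
/-!
Every `g : G` is uniquely of the form `s c + f h`, so `(c, h) ↦ s c + f h` relabels the `R`-basis
of `R[G]` by `(G ⧸ f(H)) × H`. Since `[f h] * [s c] = [s c + f h]`, the `R[H]`-linear map
`(G ⧸ f(H)) →₀ R[H] → R[G]` sending `c` to `[s c]` is, after currying, exactly this relabelling,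
hence bijective.
-/

open Function AddMonoidAlgebra

section Transversal

variable {H G : Type*} [AddGroup H] [AddGroup G] {f : H →+ G} {s : G ⧸ f.range → G}

theorem QuotientAddGroup.mk_section_add (hs : ∀ c, (s c : G ⧸ f.range) = c)
    (c : G ⧸ f.range) (h : H) : ((s c + f h : G) : G ⧸ f.range) = c := by
  refine Eq.trans ?_ (hs c)
  rw [QuotientAddGroup.eq, neg_add_rev, neg_add_cancel_right]
  exact neg_mem ⟨h, rfl⟩

theorem AddMonoidHom.bijective_section_add (hf : Injective f)
    (hs : ∀ c, (s c : G ⧸ f.range) = c) :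
    Bijective fun p : (G ⧸ f.range) × H => s p.1 + f p.2 := by
  constructor
  · rintro ⟨c, h⟩ ⟨c', h'⟩ heq
    obtain rfl : c = c' := by
      simpa only [QuotientAddGroup.mk_section_add hs] using
        congrArg ((↑) : G → G ⧸ f.range) heq
    exact Prod.ext rfl (hf (add_left_cancel heq))
  · intro g
    obtain ⟨h, hh⟩ : -s g + g ∈ f.range := by
      rw [← QuotientAddGroup.eq, hs]
    exact ⟨(g, h), by simp [hh]⟩

end Transversal

theorem AddMonoidAlgebra.bijective_linearCombination_single (R : Type*) [CommSemiring R]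
    {ι H G : Type*} [AddCommMonoid H] [AddCommMonoid G] (f : H →+ G) (s : ι → G)
    (hs : Bijective fun p : ι × H => s p.1 + f p.2) :
    letI := (mapDomainRingHom R f).toAlgebra
    Bijective (Finsupp.linearCombination R[H] fun c => single (s c) (1 : R)) := by
  let _ := (mapDomainRingHom R f).toAlgebra
  let relabel : (ι × H →₀ R) ≃+ R[G] :=
    (Finsupp.domCongr (Equiv.ofBijective _ hs)).trans coeffAddEquiv.symm
  let curry : (ι × H →₀ R) ≃+ (ι →₀ R[H]) :=
    Finsupp.curryAddEquiv.trans (Finsupp.mapRange.addEquiv coeffAddEquiv.symm)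
  have h_comp : (Finsupp.linearCombination R[H] fun c => single (s c) (1 : R)).toAddMonoidHom.comp
      curry.toAddMonoidHom = relabel.toAddMonoidHom := by
    ext ⟨c, h⟩ r
    simp [curry, relabel, Algebra.smul_def, RingHom.algebraMap_toAlgebra, single_mul_single,
      add_comm]
  have h_eq : ⇑(Finsupp.linearCombination R[H] fun c => single (s c) (1 : R)) =
      relabel ∘ curry.symm := by
    funext x
    simpa using DFunLike.congr_fun h_comp (curry.symm x)
  rw [h_eq]
  exact relabel.bijective.comp curry.symm.bijective

/-- Footnote 3: if `f : H → G` is an injective homomorphism of abelian groups, then `R[G]` is a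
free `R[H]`-module, with basis given by the basis elements of any set of coset representatives of
`f(H)` in `G`, indexed by the quotient group `G ⧸ f(H)`. -/
theorem free_monoidAlgebra_of_injective
    {R : Type*} [CommRing R] {H G : Type*} [AddCommGroup H] [AddCommGroup G]
    (f : H →+ G) (hf : Function.Injective f)
    (s : G ⧸ f.range → G)
    (hs : ∀ c : G ⧸ f.range, (QuotientAddGroup.mk (s c) : G ⧸ f.range) = c) :
    let F : AddMonoidAlgebra R H →+* AddMonoidAlgebra R G :=
      AddMonoidAlgebra.mapDomainRingHom R f
    letI := F.toAlgebra
    ∃ b : Module.Basis (G ⧸ f.range) (AddMonoidAlgebra R H) (AddMonoidAlgebra R G),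
      ∀ c : G ⧸ f.range, b c = AddMonoidAlgebra.single (s c) (1 : R) := by
  intro F
  let _ := F.toAlgebra
  have h_bij := bijective_linearCombination_single R f s (f.bijective_section_add hf hs)
  refine ⟨.ofRepr (LinearEquiv.ofBijective _ h_bij).symm, fun c => ?_⟩
  simp [Module.Basis.coe_ofRepr]
end

section
/- Fix natural numbers r and n with n ≥ 1, and let L be an additive subgroup of the group of functions Fin r → ℚ such that every vector with integer coordinates belongs to L, and such that for every x ∈ L the vector n • x has integer coordinates. Let Q̄ := {x ∈ L | ∀ i, 0 ≤ x i}. Then for every q ∈ Q̄ there exist a unique f ∈ Q̄ satisfying f i < 1 for all i, and a unique a : Fin r → ℕ, such that q = f + (fun i ↦ (a i : ℚ)). -/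
/-- Key combinatorial step in Lemma 2.6: if `ℤ^r ⊆ L ⊆ (1/n)ℤ^r` is a lattice and
`Q̄ = L ∩ ℚ^r_{≥0}`, then every element of `Q̄` can be written uniquely as `f + x` with
`f ∈ Q̄` lying in the fundamental domain `[0,1)^r` and `x ∈ ℕ^r`. -/
theorem unique_decomposition_fundamental_domain
    (r n : ℕ) (hn : 1 ≤ n) (L : AddSubgroup (Fin r → ℚ))
    (hZL : ∀ x : Fin r → ℤ, (fun i => (x i : ℚ)) ∈ L)
    (hLn : ∀ x ∈ L, ∀ i : Fin r, ∃ m : ℤ, (n : ℚ) * x i = (m : ℚ))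
    (q : Fin r → ℚ) (hqL : q ∈ L) (hq0 : ∀ i, 0 ≤ q i) :
    ∃! fa : (Fin r → ℚ) × (Fin r → ℕ),
      (fa.1 ∈ L ∧ (∀ i, 0 ≤ fa.1 i) ∧ (∀ i, fa.1 i < 1)) ∧
        q = fa.1 + fun i => (fa.2 i : ℚ) := by
  refine ⟨⟨fun i => Int.fract (q i), fun i => (⌊q i⌋).toNat⟩, ⟨⟨?_, ?_, ?_⟩, ?_⟩, ?_⟩
  · have : (fun i => Int.fract (q i)) = q - fun i => ((⌊q i⌋ : ℤ) : ℚ) := by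
      funext i; rw [Pi.sub_apply, Int.fract]
    rw [this]
    exact sub_mem hqL (hZL _)
  · exact fun i => Int.fract_nonneg _
  · exact fun i => Int.fract_lt_one _
  · funext i
    have h0 : (0 : ℤ) ≤ ⌊q i⌋ := Int.floor_nonneg.mpr (hq0 i)
    show q i = Int.fract (q i) + ((⌊q i⌋).toNat : ℚ)
    have h1 : ((⌊q i⌋).toNat : ℚ) = ((⌊q i⌋ : ℤ) : ℚ) := by
      exact_mod_cast congrArg (fun z : ℤ => (z : ℚ)) (Int.toNat_of_nonneg h0)
    rw [h1, Int.fract]; ring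
  · rintro ⟨f, a⟩ ⟨⟨hfL, hf0, hf1⟩, hq⟩
    have ha : ∀ i, ⌊q i⌋ = (a i : ℤ) := by
      intro i
      have hqi : q i = f i + a i := congrFun hq i
      have : q i = f i + ((a i : ℤ) : ℚ) := by push_cast; exact hqi
      rw [this, Int.floor_add_intCast, Int.floor_eq_zero_iff.mpr ⟨hf0 i, hf1 i⟩, zero_add]
    have haf : a = fun i => (⌊q i⌋).toNat := by
      funext i; rw [ha i]; simp
    have hff : f = fun i => Int.fract (q i) := by
      funext i
      have hqi : q i = f i + a i := congrFun hq i
      rw [Int.fract, ha i, hqi]; push_cast; ring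
    simp [haf, hff]
end

section
/- Let p be a prime and Ω a perfect field of characteristic p. Let W := 𝕎(Ω) be the ring of p-typical Witt vectors of Ω and σ : W →+* W the Witt vector Frobenius. Fix natural numbers r and s with s ≥ 1 and r ≤ s, set E := Fin s → W, and define Φ : E → E by (Φ x) 0 = p^r * σ (x (s-1)) and (Φ x) i = σ (x (i-1)) for 1 ≤ i ≤ s-1. Then for every natural number m and every x ∈ E there exists y ∈ E such that the m-fold iterate Φ^[m] applied to y equals p^{m + s - 1} • x; that is, p^{m+s-1} E ⊆ Φ^m(E). -/
/-- Slope estimate from the proof of Proposition 4.1: for the elementary `F`-crystal of slope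
`r/s` over the Witt vectors of a perfect field `Ω` of characteristic `p`, one has
`p^{m+s-1} E ⊆ Φ^m(E)` for every `m`. -/
theorem pow_smul_mem_range_iterate_frobenius_structure
    (p : ℕ) [Fact p.Prime] (Ω : Type*) [Field Ω] [CharP Ω p] [PerfectRing Ω p]
    (r s : ℕ) (hs : 1 ≤ s) (hrs : r ≤ s)
    (Φ : (Fin s → WittVector p Ω) → (Fin s → WittVector p Ω))
    (hΦ : ∀ (x : Fin s → WittVector p Ω) (i : Fin s),
      Φ x i =
        if (i : ℕ) = 0 then
          (p : WittVector p Ω) ^ r * WittVector.frobenius (x ⟨s - 1, by omega⟩)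
        else
          WittVector.frobenius (x ⟨(i : ℕ) - 1, by have := i.isLt; omega⟩)) :
    ∀ (m : ℕ) (x : Fin s → WittVector p Ω),
      ∃ y : Fin s → WittVector p Ω, Φ^[m] y = (p : WittVector p Ω) ^ (m + s - 1) • x := by
  haveI : NeZero s := ⟨by omega⟩
  have hστ : ∀ a : WittVector p Ω,
      WittVector.frobenius ((WittVector.frobeniusEquiv p Ω).symm a) = a := fun a =>
    (WittVector.frobeniusEquiv p Ω).apply_symm_apply a
  -- key claim with per-component exponents
  have key : ∀ (m : ℕ) (x : Fin s → WittVector p Ω), ∃ y : Fin s → WittVector p Ω,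
      ∀ i : Fin s,
        Φ^[m] y i = (p : WittVector p Ω) ^ (r * ((m + s - 1 - (i : ℕ)) / s)) * x i := by
    intro m
    induction m with
    | zero =>
      intro x
      refine ⟨x, fun i => ?_⟩
      have hi : (0 + s - 1 - (i : ℕ)) / s = 0 := Nat.div_eq_of_lt (by have := i.isLt; omega)
      rw [hi]
      simp
    | succ m ih =>
      intro x
      obtain ⟨y, hy⟩ := ih (fun j => (WittVector.frobeniusEquiv p Ω).symm (x (j + 1)))
      refine ⟨y, fun i => ?_⟩
      rw [Function.iterate_succ_apply', hΦ]
      by_cases h0 : (i : ℕ) = 0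
      · rw [if_pos h0, hy ⟨s - 1, by omega⟩]
        have hidx : ((⟨s - 1, by omega⟩ : Fin s) + 1) = i := by
          apply Fin.ext
          simp only [Fin.add_def, Fin.val_one', h0]
          rcases eq_or_lt_of_le hs with h | h
          · simp [← h]
          · rw [Nat.mod_eq_of_lt h, Nat.sub_add_cancel hs, Nat.mod_self]
        rw [hidx]
        rw [map_mul, map_pow, map_natCast, hστ]
        have harith : r * ((m + 1 + s - 1 - (i : ℕ)) / s)
            = r + r * ((m + s - 1 - (s - 1)) / s) := by
          have h1 : m + 1 + s - 1 - (i : ℕ) = m + s := by omega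
          have h2 : m + s - 1 - (s - 1) = m := by omega
          rw [h1, h2, Nat.add_div_right _ (by omega : 0 < s), Nat.mul_add, Nat.mul_one,
            Nat.add_comm]
        rw [harith, pow_add]
        ring
      · rw [if_neg h0, hy ⟨(i : ℕ) - 1, by have := i.isLt; omega⟩]
        have hidx : ((⟨(i : ℕ) - 1, by have := i.isLt; omega⟩ : Fin s) + 1) = i := by
          apply Fin.ext
          have := i.isLt
          have h1 : 1 < s := by omega
          simp only [Fin.add_def, Fin.val_one']
          rw [Nat.mod_eq_of_lt h1, Nat.sub_add_cancel (by omega : 1 ≤ (i : ℕ)),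
            Nat.mod_eq_of_lt this]
        rw [hidx]
        rw [map_mul, map_pow, map_natCast, hστ]
        have harith : m + s - 1 - ((i : ℕ) - 1) = m + 1 + s - 1 - (i : ℕ) := by
          have := i.isLt; omega
        rw [harith]
  intro m x
  obtain ⟨y, hy⟩ := key m (fun i =>
    (p : WittVector p Ω) ^ (m + s - 1 - r * ((m + s - 1 - (i : ℕ)) / s)) * x i)
  refine ⟨y, funext fun i => ?_⟩
  rw [hy i, Pi.smul_apply, smul_eq_mul, ← mul_assoc, ← pow_add]
  congr 2
  have hle : r * ((m + s - 1 - (i : ℕ)) / s) ≤ m + s - 1 := by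
    calc r * ((m + s - 1 - (i : ℕ)) / s) ≤ s * ((m + s - 1 - (i : ℕ)) / s) :=
          Nat.mul_le_mul_right _ hrs
      _ = (m + s - 1 - (i : ℕ)) / s * s := Nat.mul_comm _ _
      _ ≤ m + s - 1 - (i : ℕ) := Nat.div_mul_le_self _ _
      _ ≤ m + s - 1 := Nat.sub_le _ _
  omega
end

section
/- Let G be an additive abelian group, T its torsion subgroup, and π : G → G ⧸ T the quotient map. Let Q be a submonoid of G, r a natural number, and φ : (Fin r → ℕ) →+ G an additive monoid homomorphism of Kummer type into Q. Then the composite π ∘ φ : (Fin r → ℕ) →+ G ⧸ T is of Kummer type into the image submonoid π(Q); moreover, if Q is finitely generated then π(Q) is finitely generated, and if Q is saturated in G then π(Q) is saturated in G ⧸ T. -/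
/-- First step of the proof of Lemma 2.6: passing to the torsion-free quotient `G ⧸ G_tors`
preserves the Kummer-type condition, finite generation, and saturatedness. -/
theorem kummerType_map_torsionQuotient
    {G : Type*} [AddCommGroup G] (Q : AddSubmonoid G) {r : ℕ}
    (φ : (Fin r → ℕ) →+ G) (hφ : IsKummerType φ Q) :
    let π : G →+ G ⧸ AddCommGroup.torsion G := QuotientAddGroup.mk' (AddCommGroup.torsion G)
    IsKummerType (π.comp φ) (Q.map π) ∧
      (Q.FG → (Q.map π).FG) ∧
      (IsSaturated Q → IsSaturated (Q.map π)) := by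
  intro π
  obtain ⟨hinj, hsub, hkum⟩ := hφ
  refine ⟨⟨?_, ?_, ?_⟩, ?_, ?_⟩
  · -- injectivity
    intro x y hxy
    simp only [AddMonoidHom.comp_apply] at hxy
    have h : φ x - φ y ∈ AddCommGroup.torsion G := by
      have h0 : π (φ x - φ y) = 0 := by simp [map_sub, hxy]
      rwa [← AddMonoidHom.mem_ker, QuotientAddGroup.ker_mk'] at h0
    obtain ⟨n, hn0, hn⟩ := isOfFinAddOrder_iff_nsmul_eq_zero.mp h
    have h2 : φ (n • x) = φ (n • y) := by
      rw [map_nsmul, map_nsmul]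
      rw [smul_sub, sub_eq_zero] at hn
      exact hn
    have h3 : n • x = n • y := hinj h2
    funext i
    have := congrFun h3 i
    simp only [Pi.smul_apply, smul_eq_mul] at this
    exact Nat.eq_of_mul_eq_mul_left hn0 this
  · intro x
    exact ⟨φ x, hsub x, rfl⟩
  · rintro q' ⟨q, hq, rfl⟩
    obtain ⟨n, hn1, x, hx⟩ := hkum q hq
    exact ⟨n, hn1, x, by simp [← hx, ← map_zsmul]⟩
  · intro hFG
    exact AddSubmonoid.FG.map hFG π
  · rintro hsat g' hg' ⟨n, hn1, hmem⟩
    obtain ⟨q, hq, hq'⟩ := hmem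
    have hclo : (Q.map π : Set (G ⧸ AddCommGroup.torsion G)) = π '' (Q : Set G) := rfl
    rw [hclo, ← AddMonoidHom.map_closure] at hg'
    obtain ⟨g, hg, rfl⟩ := hg'
    have hmem2 : (n • g - q) ∈ AddCommGroup.torsion G := by
      have : π (n • g - q) = 0 := by
        simp only [map_sub, map_zsmul, hq', sub_self]
      rwa [← AddMonoidHom.mem_ker, QuotientAddGroup.ker_mk'] at this
    obtain ⟨m, hm0, hm⟩ := isOfFinAddOrder_iff_nsmul_eq_zero.mp hmem2
    have hkey : ((m : ℤ) * n) • g ∈ Q := by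
      have : ((m : ℤ) * n) • g = (m : ℕ) • q := by
        rw [smul_sub, sub_eq_zero] at hm
        rw [mul_smul, natCast_zsmul] at *
        exact_mod_cast hm
      rw [this]
      exact AddSubmonoid.nsmul_mem Q hq m
    have hg' : g ∈ Q := hsat g hg ⟨(m : ℤ) * n, by have hm1 : (1:ℤ) ≤ (m:ℤ) := Int.ofNat_le.mpr hm0; nlinarith, hkey⟩
    exact ⟨g, hg', rfl⟩
end
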